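/- Let p be an odd prime, G = GL₂(F_p), B the upper triangular Borel subgroup, and U₁ ≤ B the subgroup of upper triangular matrices whose top-left entry is a nonzero square in F_p. Then the double coset space U₁\G/U₁ has exactly 3 elements: U₁, B \ U₁, and G \ B. -/

import Mathlib

/-!
The upper triangular matrices form a subgroup `B ⊇ U₁`, and `U₁` has index two in `B`: the
top-left entry of `d⁻¹ g` is the quotient of those of `g` and `d`, and in a finite field the
quotient of two nonsquares is a square. So `B` is the union of the two double cosets `U₁` and
`U₁ d U₁ = B \ U₁`, with `d = diag(n, 1)` for a nonsquare `n` (which exists as `p` is odd).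
Every `g ∉ B` factors as `u w v` with `u, v ∈ U₁` and `w` the Weyl element, so `G \ B` is the
single double coset `U₁ w U₁`.
-/

open Matrix

theorem FiniteField.isSquare_mul_of_not_isSquare {F : Type*} [Field F] [Fintype F] {a b : F}
    (ha : ¬IsSquare a) (hb : ¬IsSquare b) : IsSquare (a * b) := by
  classical
  have ne_zero {x : F} (hx : ¬IsSquare x) : x ≠ 0 := by rintro rfl; exact hx IsSquare.zero
  refine (quadraticChar_one_iff_isSquare (mul_ne_zero (ne_zero ha) (ne_zero hb))).mp ?_
  rw [map_mul, quadraticChar_neg_one_iff_not_isSquare.mpr ha,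
    quadraticChar_neg_one_iff_not_isSquare.mpr hb, neg_one_mul, neg_neg]

namespace DoubleCoset

variable {G : Type*} [Group G]

theorem natCard_quotient (H K : Set G) :
    Nat.card (Quotient H K) = {S | ∃ g, S = doubleCoset g H K}.ncard := by
  have hrange : Set.range (doubleCoset · H K) = {S | ∃ g, S = doubleCoset g H K} := by
    ext S
    exact exists_congr fun _ => eq_comm
  rw [← Nat.card_coe_set_eq, ← hrange]
  exact Nat.card_congr (Setoid.quotientKerEquivRange _)

theorem doubleCoset_eq_of_forall_mem {H : Subgroup G} {a : G} {S : Set G}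
    (hS : ∀ g ∈ S, ∀ u ∈ H, ∀ v ∈ H, u * g * v ∈ S) (ha : a ∈ S)
    (hcover : ∀ g ∈ S, g ∈ doubleCoset a H H) :
    doubleCoset a H H = S := by
  ext g
  refine ⟨fun hg => ?_, hcover g⟩
  obtain ⟨u, hu, v, hv, rfl⟩ := mem_doubleCoset.mp hg
  exact hS a ha u hu v hv

theorem setOf_doubleCoset_eq_of_index_two {H L : Subgroup G} (hHL : H ≤ L) {d w : G}
    (hd : d ∈ L) (hdH : d ∉ H) (hindex : ∀ g ∈ L, g ∉ H → d⁻¹ * g ∈ H)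
    (hw : w ∉ L) (hbruhat : ∀ g ∉ L, g ∈ doubleCoset w H H) :
    {S : Set G | ∃ g, S = doubleCoset g H H} =
      {(H : Set G), (L : Set G) \ H, (L : Set G)ᶜ} := by
  have mem_iff {K : Subgroup G} (hHK : H ≤ K) {u g v : G} (hu : u ∈ H) (hv : v ∈ H) :
      u * g * v ∈ K ↔ g ∈ K :=
    (K.mul_mem_cancel_right (hHK hv)).trans (K.mul_mem_cancel_left (hHK hu))
  have hH : doubleCoset 1 H H = (H : Set G) :=
    doubleCoset_eq_of_forall_mem (fun g hg u hu v hv => (mem_iff le_rfl hu hv).mpr hg) H.one_mem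
      fun g hg => mem_doubleCoset.mpr ⟨1, H.one_mem, g, hg, by group⟩
  have hLH : doubleCoset d H H = (L : Set G) \ H :=
    doubleCoset_eq_of_forall_mem
      (fun g hg u hu v hv =>
        ⟨(mem_iff hHL hu hv).mpr hg.1, (mem_iff le_rfl hu hv).not.mpr hg.2⟩)
      ⟨hd, hdH⟩
      fun g hg => mem_doubleCoset.mpr ⟨1, H.one_mem, _, hindex g hg.1 hg.2, by group⟩
  have hLc : doubleCoset w H H = (L : Set G)ᶜ :=
    doubleCoset_eq_of_forall_mem (fun g hg u hu v hv => (mem_iff hHL hu hv).not.mpr hg) hw hbruhat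
  have eq_of_mem {a g : G} {S : Set G} (hg : g ∈ S) (hS : doubleCoset a H H = S) :
      doubleCoset g H H = S :=
    (doubleCoset_eq_of_mem (hS ▸ hg)).trans hS
  ext S
  constructor
  · rintro ⟨g, rfl⟩
    by_cases hgL : g ∈ L
    · by_cases hgH : g ∈ H
      · exact .inl (eq_of_mem hgH hH)
      · exact .inr (.inl (eq_of_mem ⟨hgL, hgH⟩ hLH))
    · exact .inr (.inr (eq_of_mem hgL hLc))
  · rintro (rfl | rfl | rfl)
    exacts [⟨1, hH.symm⟩, ⟨d, hLH.symm⟩, ⟨w, hLc.symm⟩]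

theorem natCard_quotient_eq_three_of_index_two {H L : Subgroup G} (hHL : H ≤ L) {d w : G}
    (hd : d ∈ L) (hdH : d ∉ H) (hindex : ∀ g ∈ L, g ∉ H → d⁻¹ * g ∈ H)
    (hw : w ∉ L) (hbruhat : ∀ g ∉ L, g ∈ doubleCoset w H H) :
    Nat.card (Quotient (H : Set G) H) = 3 := by
  rw [natCard_quotient, setOf_doubleCoset_eq_of_index_two hHL hd hdH hindex hw hbruhat]
  refine Set.ncard_eq_three.mpr ⟨_, _, _, ?_, ?_, ?_, rfl⟩
  · exact fun h => (h ▸ H.one_mem : (1 : G) ∈ (L : Set G) \ H).2 H.one_mem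
  · exact fun h => (h ▸ H.one_mem : (1 : G) ∈ (L : Set G)ᶜ) L.one_mem
  · exact fun h => (h ▸ ⟨hd, hdH⟩ : d ∈ (L : Set G)ᶜ) hd

end DoubleCoset

namespace GL2

variable {K : Type*} [Field K]

theorem mul_apply_one_zero (g h : GL (Fin 2) K) : (g * h) 1 0 = g 1 0 * h 0 0 + g 1 1 * h 1 0 := by
  simp [Matrix.mul_apply, Fin.sum_univ_two]

theorem mul_apply_zero_zero (g h : GL (Fin 2) K) : (g * h) 0 0 = g 0 0 * h 0 0 + g 0 1 * h 1 0 := by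
  simp [Matrix.mul_apply, Fin.sum_univ_two]

theorem inv_apply_one_zero (g : GL (Fin 2) K) : g⁻¹ 1 0 = -g.val.det⁻¹ * g 1 0 := by
  simp [Matrix.inv_def, Matrix.adjugate_fin_two]

theorem inv_apply_zero_zero (g : GL (Fin 2) K) : g⁻¹ 0 0 = g.val.det⁻¹ * g 1 1 := by
  simp [Matrix.inv_def, Matrix.adjugate_fin_two]

variable (K) in
def borel : Subgroup (GL (Fin 2) K) where
  carrier := {g | g 1 0 = 0}
  mul_mem' {g h} hg hh := by simp_all [mul_apply_one_zero]
  one_mem' := by simp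
  inv_mem' {g} hg := by simp_all [inv_apply_one_zero]

theorem mem_borel {g : GL (Fin 2) K} : g ∈ borel K ↔ g 1 0 = 0 :=
  Iff.rfl

theorem det_eq_of_mem_borel {g : GL (Fin 2) K} (hg : g ∈ borel K) :
    g.val.det = g 0 0 * g 1 1 := by
  simp [det_fin_two, mem_borel.mp hg]

theorem apply_zero_zero_ne_zero_of_mem_borel {g : GL (Fin 2) K} (hg : g ∈ borel K) :
    g 0 0 ≠ 0 :=
  left_ne_zero_of_mul (det_eq_of_mem_borel hg ▸ g.det_ne_zero)

theorem mul_apply_zero_zero_of_mem_borel {g h : GL (Fin 2) K} (hh : h ∈ borel K) :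
    (g * h) 0 0 = g 0 0 * h 0 0 := by
  simp [mul_apply_zero_zero, mem_borel.mp hh]

theorem inv_apply_zero_zero_of_mem_borel {g : GL (Fin 2) K} (hg : g ∈ borel K) :
    g⁻¹ 0 0 = (g 0 0)⁻¹ := by
  have hdet := det_eq_of_mem_borel hg ▸ g.det_ne_zero
  rw [inv_apply_zero_zero, det_eq_of_mem_borel hg]
  field_simp [right_ne_zero_of_mul hdet]

variable (K) in
def squareBorel : Subgroup (GL (Fin 2) K) where
  carrier := {g | g 1 0 = 0 ∧ g 0 0 ≠ 0 ∧ IsSquare (g 0 0)}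
  mul_mem' {g h} := fun ⟨hg, hg0, hgs⟩ ⟨hh, hh0, hhs⟩ => by
    refine ⟨(borel K).mul_mem hg hh, ?_⟩
    rw [mul_apply_zero_zero_of_mem_borel hh]
    exact ⟨mul_ne_zero hg0 hh0, hgs.mul hhs⟩
  one_mem' := by simp
  inv_mem' {g} := fun ⟨hg, hg0, hgs⟩ => by
    refine ⟨(borel K).inv_mem hg, ?_⟩
    rw [inv_apply_zero_zero_of_mem_borel hg]
    exact ⟨inv_ne_zero hg0, hgs.inv⟩

theorem squareBorel_le_borel : squareBorel K ≤ borel K := fun _ hg => hg.1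

theorem mem_squareBorel {g : GL (Fin 2) K} :
    g ∈ squareBorel K ↔ g ∈ borel K ∧ IsSquare (g 0 0) :=
  ⟨fun hg => ⟨hg.1, hg.2.2⟩,
    fun hg => ⟨hg.1, apply_zero_zero_ne_zero_of_mem_borel hg.1, hg.2⟩⟩

theorem inv_mul_mem_squareBorel [Fintype K] {d g : GL (Fin 2) K} (hd : d ∈ borel K)
    (hdU : d ∉ squareBorel K) (hg : g ∈ borel K) (hgU : g ∉ squareBorel K) :
    d⁻¹ * g ∈ squareBorel K := by
  have hd0 : ¬IsSquare (d 0 0)⁻¹ :=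
    isSquare_inv.not.mpr fun hds => hdU (mem_squareBorel.mpr ⟨hd, hds⟩)
  have hg0 : ¬IsSquare (g 0 0) := fun hgs => hgU (mem_squareBorel.mpr ⟨hg, hgs⟩)
  refine mem_squareBorel.mpr ⟨(borel K).mul_mem ((borel K).inv_mem hd) hg, ?_⟩
  rw [mul_apply_zero_zero_of_mem_borel hg, inv_apply_zero_zero_of_mem_borel hd]
  exact FiniteField.isSquare_mul_of_not_isSquare hd0 hg0

def upperTriangular (a b d : K) (ha : a ≠ 0) (hd : d ≠ 0) : GL (Fin 2) K :=
  .mkOfDetNeZero !![a, b; 0, d] (by simp [det_fin_two, ha, hd])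

theorem upperTriangular_mem_borel {a b d : K} (ha : a ≠ 0) (hd : d ≠ 0) :
    upperTriangular a b d ha hd ∈ borel K := by
  simp [upperTriangular, mem_borel]

theorem upperTriangular_mem_squareBorel_iff {a b d : K} (ha : a ≠ 0) (hd : d ≠ 0) :
    upperTriangular a b d ha hd ∈ squareBorel K ↔ IsSquare a := by
  rw [mem_squareBorel, and_iff_right (upperTriangular_mem_borel ha hd)]
  simp [upperTriangular]

def weyl : GL (Fin 2) K :=
  .mkOfDetNeZero !![0, 1; 1, 0] (by simp [det_fin_two])

theorem weyl_notMem_borel : (weyl : GL (Fin 2) K) ∉ borel K := by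
  simp [weyl, mem_borel]

theorem mem_doubleCoset_weyl_of_notMem_borel {g : GL (Fin 2) K} (hg : g ∉ borel K) :
    g ∈ DoubleCoset.doubleCoset weyl (squareBorel K) (squareBorel K) := by
  have hc : g 1 0 ≠ 0 := hg
  have hdet : -g.val.det / g 1 0 ≠ 0 := by simp [g.det_ne_zero, hc]
  -- `!![a, b; c, d] = !![1, a; 0, c] * weyl * !![1, d / c; 0, -det / c]`
  refine DoubleCoset.mem_doubleCoset.mpr
    ⟨upperTriangular 1 (g 0 0) _ one_ne_zero hc,
      (upperTriangular_mem_squareBorel_iff _ _).mpr IsSquare.one,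
      upperTriangular 1 (g 1 1 / g 1 0) _ one_ne_zero hdet,
      (upperTriangular_mem_squareBorel_iff _ _).mpr IsSquare.one, ?_⟩
  ext i j
  fin_cases i <;> fin_cases j <;> simp [upperTriangular, weyl, det_fin_two]
  · field_simp
    ring
  · field_simp

end GL2

/-- Let `p` be an odd prime, `G = GL₂(𝔽_p)`, `B` the set of invertible upper triangular
matrices and `U₁ ⊆ B` the subset of those whose top-left entry is a nonzero square in
`𝔽_p`. Then the `(U₁,U₁)`-double cosets in `G` are exactly `U₁`, `B \ U₁` and `G \ B`;
in particular the double coset space `U₁\G/U₁` has exactly three elements. -/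
theorem stmt5 (p : ℕ) [Fact p.Prime] (hp : Odd p) :
    let B : Set (GL (Fin 2) (ZMod p)) :=
      {g | (g : Matrix (Fin 2) (Fin 2) (ZMod p)) 1 0 = 0}
    let U₁ : Set (GL (Fin 2) (ZMod p)) :=
      {g | (g : Matrix (Fin 2) (Fin 2) (ZMod p)) 1 0 = 0 ∧
        (g : Matrix (Fin 2) (Fin 2) (ZMod p)) 0 0 ≠ 0 ∧
        IsSquare ((g : Matrix (Fin 2) (Fin 2) (ZMod p)) 0 0)}
    {S : Set (GL (Fin 2) (ZMod p)) | ∃ g, S = DoubleCoset.doubleCoset g U₁ U₁} =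
        {U₁, B \ U₁, Bᶜ} ∧
      Nat.card (DoubleCoset.Quotient U₁ U₁) = 3 := by
  intro B U₁
  rw [show B = GL2.borel (ZMod p) from rfl, show U₁ = GL2.squareBorel (ZMod p) from rfl]
  have hchar : ringChar (ZMod p) ≠ 2 := by
    rw [ZMod.ringChar_zmod_n]
    rintro rfl
    exact Nat.not_even_iff_odd.mpr hp even_two
  obtain ⟨n, hn⟩ := FiniteField.exists_nonsquare hchar
  have hn0 : n ≠ 0 := by rintro rfl; exact hn IsSquare.zero
  have hd := GL2.upperTriangular_mem_borel (b := 0) hn0 one_ne_zero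
  have hdU := (GL2.upperTriangular_mem_squareBorel_iff (b := 0) hn0 one_ne_zero).not.mpr hn
  have hindex := fun g => GL2.inv_mul_mem_squareBorel hd hdU (g := g)
  have hbruhat := fun g => GL2.mem_doubleCoset_weyl_of_notMem_borel (K := ZMod p) (g := g)
  exact ⟨DoubleCoset.setOf_doubleCoset_eq_of_index_two GL2.squareBorel_le_borel hd hdU hindex
      GL2.weyl_notMem_borel hbruhat,
    DoubleCoset.natCard_quotient_eq_three_of_index_two GL2.squareBorel_le_borel hd hdU hindex
      GL2.weyl_notMem_borel hbruhat⟩
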